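/- arXiv:1411.7208 — 3 statements merged into one kernel-verified Lean document; each statement's English description precedes it below -/
import Mathlib

section
/- For every finite simple graph G with signed Roman domination number 0, the join G ∨ K₁ (G plus one universal vertex) has signed Roman domination number exactly 1. -/
open Finset SimpleGraph
open scoped Classical

/-- The sum of `f` over the closed neighborhood of `v` in `G`. -/
noncomputable def closedNbrSum {V : Type*} [Fintype V] (G : SimpleGraph V)
    (f : V → ℤ) (v : V) : ℤ :=
  ∑ u ∈ Finset.univ.filter (fun u => u = v ∨ G.Adj v u), f u

/-- `f` is a signed Roman dominating function on `G`. -/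
def IsSRDF {V : Type*} [Fintype V] (G : SimpleGraph V) (f : V → ℤ) : Prop :=
  (∀ v, f v = -1 ∨ f v = 1 ∨ f v = 2) ∧
  (∀ v, 1 ≤ closedNbrSum G f v) ∧
  (∀ v, f v = -1 → ∃ u, G.Adj v u ∧ f u = 2)

/-- The signed Roman domination number of `G`. -/
noncomputable def gammaSR {V : Type*} [Fintype V] (G : SimpleGraph V) : ℤ :=
  sInf {w : ℤ | ∃ f, IsSRDF G f ∧ w = ∑ v, f v}

/-- The join of two graphs. -/
def graphJoin {V W : Type*} (G : SimpleGraph V) (H : SimpleGraph W) :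
    SimpleGraph (V ⊕ W) where
  Adj x y :=
    match x, y with
    | .inl a, .inl b => G.Adj a b
    | .inr a, .inr b => H.Adj a b
    | _, _ => True
  symm := by
    constructor
    rintro (a | a) (b | b) h <;> simp_all <;> exact h.symm
  loopless := by
    constructor
    rintro (a | a) h <;> simp_all

/-
A vertex adjacent to every other vertex sees the whole graph in its closed neighbourhood, so the
domination condition at it says exactly that the weight of an SRDF is at least 1; hence
γ_sR(G ∨ K₁) ≥ 1. Conversely, SRDFs of nonnegative weight on G and H glue to an SRDF of G ∨ H,
because each vertex of G gains the (nonnegative) total weight of H in its closed neighbourhood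
and vice versa. Gluing a weight-0 SRDF of G with the label 1 on K₁ gives weight 1.
-/

section SRDF

variable {V : Type*} [Fintype V] {G : SimpleGraph V} {f : V → ℤ}

theorem IsSRDF.neg_one_le (hf : IsSRDF G f) (v : V) : -1 ≤ f v := by
  rcases hf.1 v with h | h | h <;> omega

theorem IsSRDF.neg_card_le_sum (hf : IsSRDF G f) : -(Fintype.card V : ℤ) ≤ ∑ v, f v := by
  simpa using Finset.sum_le_sum fun v (_ : v ∈ univ) => hf.neg_one_le v

variable (G) in
theorem isSRDF_const_two : IsSRDF G fun _ => 2 := by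
  refine ⟨fun _ => by simp, fun v => ?_, fun _ hv => by simp at hv⟩
  calc (1 : ℤ) ≤ 2 := by norm_num
    _ ≤ closedNbrSum G (fun _ => 2) v :=
      Finset.single_le_sum (f := fun _ => (2 : ℤ)) (a := v) (fun _ _ => by norm_num) (by simp)

variable (G) in
theorem srdfWeights_nonempty : {w : ℤ | ∃ f, IsSRDF G f ∧ w = ∑ v, f v}.Nonempty :=
  ⟨_, _, isSRDF_const_two G, rfl⟩

variable (G) in
theorem srdfWeights_bddBelow : BddBelow {w : ℤ | ∃ f, IsSRDF G f ∧ w = ∑ v, f v} := by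
  refine ⟨-(Fintype.card V : ℤ), ?_⟩
  rintro _ ⟨f, hf, rfl⟩
  exact hf.neg_card_le_sum

variable (G) in
theorem exists_isSRDF_sum_eq_gammaSR : ∃ f, IsSRDF G f ∧ ∑ v, f v = gammaSR G := by
  obtain ⟨f, hf, hw⟩ := Int.csInf_mem (srdfWeights_nonempty G) (srdfWeights_bddBelow G)
  exact ⟨f, hf, hw.symm⟩

theorem IsSRDF.gammaSR_le (hf : IsSRDF G f) : gammaSR G ≤ ∑ v, f v :=
  csInf_le (srdfWeights_bddBelow G) ⟨f, hf, rfl⟩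

theorem le_gammaSR {c : ℤ} (h : ∀ f, IsSRDF G f → c ≤ ∑ v, f v) : c ≤ gammaSR G := by
  apply le_csInf (srdfWeights_nonempty G)
  rintro _ ⟨f, hf, rfl⟩
  exact h f hf

theorem closedNbrSum_eq_sum_of_forall_adj {v : V} (hv : ∀ u, u ≠ v → G.Adj v u) :
    closedNbrSum G f v = ∑ u, f u := by
  unfold closedNbrSum
  congr
  ext u
  simpa using (em (u = v)).imp_right (hv u)

theorem one_le_gammaSR_of_forall_adj {v : V} (hv : ∀ u, u ≠ v → G.Adj v u) :
    1 ≤ gammaSR G :=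
  le_gammaSR fun _ hf => closedNbrSum_eq_sum_of_forall_adj hv ▸ hf.2.1 v

end SRDF

section Join

variable {V W : Type*} {G : SimpleGraph V} {H : SimpleGraph W}

@[simp] theorem graphJoin_adj_inl_inl {a b : V} :
    (graphJoin G H).Adj (.inl a) (.inl b) ↔ G.Adj a b := Iff.rfl

@[simp] theorem graphJoin_adj_inr_inr {a b : W} :
    (graphJoin G H).Adj (.inr a) (.inr b) ↔ H.Adj a b := Iff.rfl

@[simp] theorem graphJoin_adj_inl_inr {a : V} {b : W} :
    (graphJoin G H).Adj (.inl a) (.inr b) := trivial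

@[simp] theorem graphJoin_adj_inr_inl {a : W} {b : V} :
    (graphJoin G H).Adj (.inr a) (.inl b) := trivial

variable [Fintype V] [Fintype W]

theorem closedNbrSum_graphJoin_inl (g : V ⊕ W → ℤ) (a : V) :
    closedNbrSum (graphJoin G H) g (.inl a) =
      closedNbrSum G (g ∘ .inl) a + ∑ b, g (.inr b) := by
  simp [closedNbrSum, Finset.sum_filter, Fintype.sum_sum_type]

theorem closedNbrSum_graphJoin_inr (g : V ⊕ W → ℤ) (b : W) :
    closedNbrSum (graphJoin G H) g (.inr b) =
      ∑ a, g (.inl a) + closedNbrSum H (g ∘ .inr) b := by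
  simp [closedNbrSum, Finset.sum_filter, Fintype.sum_sum_type]

theorem IsSRDF.sumElim_graphJoin {f : V → ℤ} {g : W → ℤ} (hf : IsSRDF G f) (hg : IsSRDF H g)
    (hf₀ : 0 ≤ ∑ v, f v) (hg₀ : 0 ≤ ∑ w, g w) : IsSRDF (graphJoin G H) (Sum.elim f g) := by
  refine ⟨?_, ?_, ?_⟩
  · rintro (a | b)
    exacts [hf.1 a, hg.1 b]
  · rintro (a | b)
    · have := hf.2.1 a
      rw [closedNbrSum_graphJoin_inl]
      simp only [Sum.elim_comp_inl, Sum.elim_inr]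
      omega
    · have := hg.2.1 b
      rw [closedNbrSum_graphJoin_inr]
      simp only [Sum.elim_comp_inr, Sum.elim_inl]
      omega
  · rintro (a | b) hv
    · obtain ⟨u, hu, hu2⟩ := hf.2.2 a hv
      exact ⟨.inl u, hu, hu2⟩
    · obtain ⟨u, hu, hu2⟩ := hg.2.2 b hv
      exact ⟨.inr u, hu, hu2⟩

theorem gammaSR_graphJoin_le (hG : 0 ≤ gammaSR G) (hH : 0 ≤ gammaSR H) :
    gammaSR (graphJoin G H) ≤ gammaSR G + gammaSR H := by
  obtain ⟨f, hf, hfw⟩ := exists_isSRDF_sum_eq_gammaSR G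
  obtain ⟨g, hg, hgw⟩ := exists_isSRDF_sum_eq_gammaSR H
  have := (hf.sumElim_graphJoin hg (hfw ▸ hG) (hgw ▸ hH)).gammaSR_le
  simpa only [Fintype.sum_sum_type, Sum.elim_inl, Sum.elim_inr, hfw, hgw] using this

end Join

theorem gammaSR_bot_fin_one : gammaSR (⊥ : SimpleGraph (Fin 1)) = 1 := by
  have hone : IsSRDF (⊥ : SimpleGraph (Fin 1)) fun _ => 1 := by
    refine ⟨fun _ => by simp, fun v => ?_, fun _ hv => by simp at hv⟩
    rw [closedNbrSum_eq_sum_of_forall_adj fun u huv => absurd (Subsingleton.elim u v) huv]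
    simp
  refine le_antisymm (by simpa using hone.gammaSR_le) ?_
  exact one_le_gammaSR_of_forall_adj (v := 0) fun u hu => absurd (Subsingleton.elim u 0) hu

theorem stmt1 {V : Type*} [Fintype V] (G : SimpleGraph V)
    (h : gammaSR G = 0) :
    gammaSR (graphJoin G (⊥ : SimpleGraph (Fin 1))) = 1 := by
  refine le_antisymm ?_ (one_le_gammaSR_of_forall_adj (v := .inr 0) ?_)
  · have := gammaSR_graphJoin_le (G := G) (H := ⊥) h.ge (gammaSR_bot_fin_one ▸ zero_le_one)
    rwa [h, gammaSR_bot_fin_one, zero_add] at this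
  · rintro (a | b) hb
    · exact graphJoin_adj_inr_inl
    · exact absurd (congrArg Sum.inr (Subsingleton.elim b 0)) hb
end

section
/- Let n ≥ 13 with n not congruent to 2 mod 3. If f:V(Cₙ)→{−1,1,2} is any function whose total sum over the cycle equals 1, then there exists a vertex y of Cₙ with ∑_{z∈N[y]} f(z) < 0. -/
open Finset SimpleGraph
open scoped Classical

/-!
Suppose every window sum `f (y-1) + f y + f (y+1)` is nonnegative. The windows centred at
`y, y+3, y+6, …` tile the cycle when `3 ∣ n`, and tile all of it but one vertex when
`n ≡ 1 (mod 3)`. In the second case every value is therefore at most `∑ f = 1`, so all values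
are `±1`, every window sum is odd, hence at least `1`, and summing over all windows gives
`n ≤ 3`. In the first case every window sum is at most `1`, and some vertex `u` has value `1`
(otherwise all values are `≡ 2 (mod 3)` and their sum is `≡ 2n ≡ 0`). Then the windows at
`u ± 1` have sum exactly `1`, the window at `u + 2`, tiled together with `u - 1`, has sum `0`,
and comparing the windows at `u + 1` and `u + 2` gives `f (u + 3) = f u - 1 = 0`.
-/

open scoped Fin.CommRing

lemma closedNbrSum_eq_add_sum_neighborFinset {V : Type*} [Fintype V] (G : SimpleGraph V)
    (f : V → ℤ) (v : V) [Fintype (G.neighborSet v)] :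
    closedNbrSum G f v = f v + ∑ u ∈ G.neighborFinset v, f u := by
  have hfilter : univ.filter (fun u => u = v ∨ G.Adj v u) = insert v (G.neighborFinset v) := by
    ext u
    simp
  rw [closedNbrSum, hfilter, sum_insert (by simp)]

section windowSum

variable {R M : Type*} [AddGroupWithOne R] [AddCommMonoid M]

def windowSum (f : R → M) (y : R) : M :=
  f (y - 1) + f y + f (y + 1)

lemma sum_windowSum [Fintype R] (f : R → M) : ∑ y, windowSum f y = 3 • ∑ x, f x := by
  have h_sub : ∑ y, f (y - 1) = ∑ x, f x :=
    Fintype.sum_equiv (Equiv.subRight 1) _ _ fun _ ↦ rfl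
  have h_add : ∑ y, f (y + 1) = ∑ x, f x :=
    Fintype.sum_equiv (Equiv.addRight 1) _ _ fun _ ↦ rfl
  simp only [windowSum, sum_add_distrib, h_sub, h_add, succ_nsmul, zero_nsmul, zero_add]

lemma sum_range_windowSum (f : R → M) (v : R) (m : ℕ) :
    ∑ k ∈ range m, windowSum f (v + ((3 * k + 1 : ℕ) : R)) =
      ∑ j ∈ range (3 * m), f (v + (j : R)) := by
  induction m with
  | zero => simp
  | succ m ih =>
    rw [sum_range_succ, ih, show 3 * (m + 1) = 3 * m + 1 + 1 + 1 by ring, sum_range_succ,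
      sum_range_succ, sum_range_succ, windowSum]
    simp only [Nat.cast_add, Nat.cast_one, Nat.cast_ofNat, ← add_assoc, add_sub_cancel_right]
    rw [add_assoc _ 1 1, one_add_one_eq_two]

end windowSum

lemma closedNbrSum_cycleGraph (n : ℕ) (f : Fin (n + 3) → ℤ) (v : Fin (n + 3)) :
    closedNbrSum (cycleGraph (n + 3)) f v = windowSum f v := by
  have hne : v - 1 ≠ v + 1 := by
    intro h
    have h2 : (2 : Fin (n + 3)) = 0 := by linear_combination -h
    simp [Fin.ext_iff, Nat.mod_eq_of_lt (show 2 < n + 3 by omega)] at h2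
  have hnbr : (cycleGraph (n + 3)).neighborFinset v = {v - 1, v + 1} :=
    cycleGraph_neighborFinset (n := n + 1)
  rw [closedNbrSum_eq_add_sum_neighborFinset, hnbr, sum_pair hne, windowSum]
  abel

lemma exists_eq_one_of_three_dvd_card {α : Type*} [Fintype α] (f : α → ℤ)
    (hcard : 3 ∣ Fintype.card α) (hf : ∀ v, f v = -1 ∨ f v = 1 ∨ f v = 2)
    (hsum : ∑ x, f x = 1) : ∃ u, f u = 1 := by
  by_contra! hne
  have hdvd : (3 : ℤ) ∣ ∑ x, (f x + 1) :=
    dvd_sum fun x _ ↦ by rcases hf x with h | h | h <;> simp_all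
  rw [sum_add_distrib, hsum, sum_const, card_univ, nsmul_one] at hdvd
  omega

section Fin

variable {n m : ℕ} [NeZero n]

lemma sum_range_add_natCast {M : Type*} [AddCommMonoid M] (f : Fin n → M) (v : Fin n) :
    ∑ j ∈ range n, f (v + j) = ∑ x, f x := by
  rw [← Fin.sum_univ_eq_sum_range (fun j ↦ f (v + j))]
  simp only [Fin.cast_val_eq_self]
  exact Fintype.sum_equiv (Equiv.addLeft v) _ _ fun _ ↦ rfl

lemma sum_range_windowSum_of_eq_three_mul {M : Type*} [AddCommMonoid M] (f : Fin n → M)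
    (hn : n = 3 * m) (v : Fin n) :
    ∑ k ∈ range m, windowSum f (v + ((3 * k + 1 : ℕ) : Fin n)) = ∑ x, f x := by
  rw [sum_range_windowSum, ← hn, sum_range_add_natCast]

lemma sum_range_windowSum_add_of_eq_three_mul_add_one {M : Type*} [AddCommMonoid M]
    (f : Fin n → M) (hn : n = 3 * m + 1) (v : Fin n) :
    ∑ k ∈ range m, windowSum f (v + ((3 * k + 1 : ℕ) : Fin n)) + f (v - 1) = ∑ x, f x := by
  have hlast : ((3 * m : ℕ) : Fin n) = -1 := by
    rw [eq_neg_iff_add_eq_zero, ← Nat.cast_add_one, ← hn, CharP.cast_eq_zero]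
  rw [sum_range_windowSum, ← sum_range_add_natCast f v,
    show range n = range (3 * m + 1) by rw [hn], sum_range_succ, hlast, sub_eq_add_neg]

variable {f : Fin n → ℤ}

lemma windowSum_add_windowSum_add_three_le (hn : n = 3 * m) (hm : 2 ≤ m)
    (hW : ∀ y, 0 ≤ windowSum f y) (y : Fin n) :
    windowSum f y + windowSum f (y + 3) ≤ ∑ x, f x := by
  have hsub : ({0, 1} : Finset ℕ) ⊆ range m := by
    intro k hk
    simp only [mem_insert, mem_singleton] at hk
    rw [mem_range]
    omega
  calc windowSum f y + windowSum f (y + 3)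
      = ∑ k ∈ {0, 1}, windowSum f (y - 1 + ((3 * k + 1 : ℕ) : Fin n)) := by
        rw [sum_pair zero_ne_one]
        push_cast
        ring_nf
    _ ≤ ∑ k ∈ range m, windowSum f (y - 1 + ((3 * k + 1 : ℕ) : Fin n)) :=
        sum_le_sum_of_subset_of_nonneg hsub fun _ _ _ ↦ hW _
    _ = ∑ x, f x := sum_range_windowSum_of_eq_three_mul f hn _

lemma le_sum_of_eq_three_mul_add_one (hn : n = 3 * m + 1) (hW : ∀ y, 0 ≤ windowSum f y)
    (w : Fin n) : f w ≤ ∑ x, f x := by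
  have h := sum_range_windowSum_add_of_eq_three_mul_add_one f hn (w + 1)
  rw [add_sub_cancel_right] at h
  linarith [sum_nonneg fun k (_ : k ∈ range m) ↦ hW (w + 1 + ((3 * k + 1 : ℕ) : Fin n))]

variable (hf : ∀ v, f v = -1 ∨ f v = 1 ∨ f v = 2) (hsum : ∑ x, f x = 1)
include hf hsum

theorem exists_windowSum_neg_of_eq_three_mul (hn : n = 3 * m) (hm : 2 ≤ m) :
    ∃ y, windowSum f y < 0 := by
  by_contra! hW
  have hle : ∀ y, windowSum f y ≤ 1 := fun y ↦ by
    linarith [windowSum_add_windowSum_add_three_le hn hm hW y, hW (y + 3)]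
  obtain ⟨u, hu⟩ := exists_eq_one_of_three_dvd_card f (by simp [hn]) hf hsum
  -- No two values in {-1, 1, 2} sum to -1 or 0, so a window through `u` has sum exactly 1.
  have h_left : windowSum f (u - 1) = 1 := by
    have h₀ := hW (u - 1)
    have h₁ := hle (u - 1)
    rw [windowSum, sub_add_cancel] at h₀ h₁ ⊢
    rcases hf (u - 1 - 1) with h | h | h <;> rcases hf (u - 1) with h' | h' | h' <;> omega
  have h_right : windowSum f (u + 1) = 1 := by
    have h₀ := hW (u + 1)
    have h₁ := hle (u + 1)
    rw [windowSum, add_sub_cancel_right] at h₀ h₁ ⊢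
    rcases hf (u + 1) with h | h | h <;> rcases hf (u + 1 + 1) with h' | h' | h' <;> omega
  have h_next : windowSum f (u + 2) = 0 := by
    have h := windowSum_add_windowSum_add_three_le hn hm hW (u - 1)
    rw [show u - 1 + 3 = u + 2 by ring] at h
    linarith [hW (u + 2)]
  have h_zero : f (u + 3) = 0 := by
    rw [windowSum, add_sub_cancel_right, show u + 1 + 1 = u + 2 by ring] at h_right
    rw [windowSum, show u + 2 - 1 = u + 1 by ring, show u + 2 + 1 = u + 3 by ring] at h_next
    linarith
  rcases hf (u + 3) with h | h | h <;> omega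

theorem exists_windowSum_neg_of_eq_three_mul_add_one (hn : n = 3 * m + 1) (hm : 1 ≤ m) :
    ∃ y, windowSum f y < 0 := by
  by_contra! hW
  have hle : ∀ w, f w ≤ 1 := hsum ▸ le_sum_of_eq_three_mul_add_one hn hW
  have hpos : ∀ y, 1 ≤ windowSum f y := fun y ↦ by
    have h₀ := hW y
    rw [windowSum] at h₀ ⊢
    have := hle (y - 1); have := hle y; have := hle (y + 1)
    rcases hf (y - 1) with h | h | h <;> rcases hf y with h' | h' | h' <;>
      rcases hf (y + 1) with h'' | h'' | h'' <;> omega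
  have hcard : (n : ℤ) ≤ 3 :=
    calc (n : ℤ) = ∑ _y : Fin n, 1 := by simp
      _ ≤ ∑ y, windowSum f y := sum_le_sum fun y _ ↦ hpos y
      _ = 3 := by rw [sum_windowSum, hsum]; rfl
  omega

theorem exists_windowSum_neg (hn : 4 ≤ n) (hn3 : n % 3 ≠ 2) : ∃ y, windowSum f y < 0 := by
  rcases (by omega : n = 3 * (n / 3) ∨ n = 3 * (n / 3) + 1) with h | h
  · exact exists_windowSum_neg_of_eq_three_mul hf hsum h (by omega)
  · exact exists_windowSum_neg_of_eq_three_mul_add_one hf hsum h (by omega)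

end Fin

theorem stmt7 (n : ℕ) (hn : 13 ≤ n) (hn3 : n % 3 ≠ 2)
    (f : Fin n → ℤ) (hf : ∀ v, f v = -1 ∨ f v = 1 ∨ f v = 2)
    (hsum : ∑ v, f v = 1) :
    ∃ y : Fin n, closedNbrSum (cycleGraph n) f y < 0 := by
  obtain ⟨k, rfl⟩ : ∃ k, n = k + 3 := ⟨n - 3, by omega⟩
  obtain ⟨y, hy⟩ := exists_windowSum_neg hf hsum (by omega) hn3
  exact ⟨y, by rwa [closedNbrSum_cycleGraph]⟩
end

section
/- For every integer m ≥ 2, the friendship graph Fr_{2m+1} = K₁ ∨ (m·K₂), consisting of m triangles sharing one common vertex, has signed Roman domination number exactly 2. -/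
open Finset SimpleGraph
open scoped Classical

/-- The disjoint union of `m` copies of `K₂`. -/
def mK2 (m : ℕ) : SimpleGraph (Fin m × Fin 2) where
  Adj x y := x.1 = y.1 ∧ x.2 ≠ y.2
  symm := ⟨fun x y h => ⟨h.1.symm, h.2.symm⟩⟩
  loopless := ⟨fun x h => h.2 rfl⟩

/-- The friendship graph with `m` triangles sharing a common vertex. -/
def friendshipGraph (m : ℕ) : SimpleGraph (Fin 1 ⊕ (Fin m × Fin 2)) :=
  graphJoin (⊥ : SimpleGraph (Fin 1)) (mK2 m)

/-!
Every leaf's closed neighbourhood is its triangle, so each triangle has weight at least `1`.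
The two leaves of a triangle can sum to a negative value only as `-1, -1`, which violates that
bound, and to `0` only as `1, -1`, where the `-1` needs the centre labelled `2`. So the weight
is at least `2` when the centre is labelled `2`; otherwise one triangle contributes at least `1`
and the leaves of a second one at least another `1`. Labelling the centre `2` and the leaves of
each triangle `1` and `-1` attains `2`.
-/

lemma gammaSR_eq_of_isSRDF {V : Type*} [Fintype V] {G : SimpleGraph V} {f : V → ℤ}
    (hf : IsSRDF G f) (hle : ∀ g, IsSRDF G g → ∑ v, f v ≤ ∑ v, g v) :
    gammaSR G = ∑ v, f v :=
  IsLeast.csInf_eq ⟨⟨f, hf, rfl⟩, by rintro _ ⟨g, hg, rfl⟩; exact hle g hg⟩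

lemma pair_sum_bound_of_triangle {c a b : ℤ} (hc : c ≤ 2) (ha : a = -1 ∨ a = 1 ∨ a = 2)
    (hb : b = -1 ∨ b = 1 ∨ b = 2) (hsum : 1 ≤ c + a + b) (ha' : a = -1 → c = 2 ∨ b = 2)
    (hb' : b = -1 → c = 2 ∨ a = 2) : 0 ≤ a + b ∧ (c ≠ 2 → 1 ≤ a + b) := by
  omega

namespace friendshipGraph

variable {m : ℕ} {f : Fin 1 ⊕ (Fin m × Fin 2) → ℤ}

@[simp] lemma adj_inl_inr (j : Fin 1) (p : Fin m × Fin 2) :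
    (friendshipGraph m).Adj (.inl j) (.inr p) := trivial

@[simp] lemma adj_inr_inl (p : Fin m × Fin 2) (j : Fin 1) :
    (friendshipGraph m).Adj (.inr p) (.inl j) := trivial

@[simp] lemma adj_inr_inr (p q : Fin m × Fin 2) :
    (friendshipGraph m).Adj (.inr p) (.inr q) ↔ p.1 = q.1 ∧ p.2 ≠ q.2 := Iff.rfl

lemma sum_eq (f : Fin 1 ⊕ (Fin m × Fin 2) → ℤ) :
    ∑ v, f v = f (.inl 0) + ∑ i, (f (.inr (i, 0)) + f (.inr (i, 1))) := by
  simp [Fintype.sum_sum_type, Fintype.sum_prod_type, Fin.sum_univ_two]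

lemma closedNbrSum_inl (f : Fin 1 ⊕ (Fin m × Fin 2) → ℤ) (j : Fin 1) :
    closedNbrSum (friendshipGraph m) f (.inl j) = ∑ v, f v := by
  rw [closedNbrSum, Finset.sum_filter]
  simp [Fintype.sum_sum_type, Subsingleton.elim _ j]

lemma closedNbrSum_inr (f : Fin 1 ⊕ (Fin m × Fin 2) → ℤ) (i : Fin m) (a : Fin 2) :
    closedNbrSum (friendshipGraph m) f (.inr (i, a)) =
      f (.inl 0) + f (.inr (i, 0)) + f (.inr (i, 1)) := by
  rw [closedNbrSum, Finset.sum_filter]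
  fin_cases a <;>
    simp [Fintype.sum_sum_type, Fintype.sum_prod_type, Fin.sum_univ_two, eq_comm (a := i),
      Finset.sum_add_distrib, add_assoc]

lemma eq_two_of_leaf_eq_neg_one (hf : IsSRDF (friendshipGraph m) f) {i : Fin m} {a b : Fin 2}
    (hab : a ≠ b) (h : f (.inr (i, a)) = -1) : f (.inl 0) = 2 ∨ f (.inr (i, b)) = 2 := by
  obtain ⟨j | ⟨j, c⟩, hadj, hu⟩ := hf.2.2 _ h
  · exact .inl (Subsingleton.elim j 0 ▸ hu)
  · obtain ⟨rfl, hac⟩ := (adj_inr_inr _ _).1 hadj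
    obtain rfl : c = b := by simp only at hac; omega
    exact .inr hu

lemma leaf_pair_sum_bound (hf : IsSRDF (friendshipGraph m) f) (i : Fin m) :
    0 ≤ f (.inr (i, 0)) + f (.inr (i, 1)) ∧
      (f (.inl 0) ≠ 2 → 1 ≤ f (.inr (i, 0)) + f (.inr (i, 1))) := by
  refine pair_sum_bound_of_triangle ?_ (hf.1 _) (hf.1 _) ?_
    (eq_two_of_leaf_eq_neg_one hf (by decide)) (eq_two_of_leaf_eq_neg_one hf (by decide))
  · rcases hf.1 (.inl 0) with h | h | h <;> omega
  · simpa only [closedNbrSum_inr] using hf.2.1 (.inr (i, 0))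

lemma two_le_sum_of_isSRDF (hm : 2 ≤ m) (hf : IsSRDF (friendshipGraph m) f) :
    2 ≤ ∑ v, f v := by
  rw [sum_eq]
  set p : Fin m → ℤ := fun i => f (.inr (i, 0)) + f (.inr (i, 1))
  have hp_nonneg : ∀ i, 0 ≤ p i := fun i => (leaf_pair_sum_bound hf i).1
  by_cases hc : f (.inl 0) = 2
  · linarith [Finset.sum_nonneg (s := Finset.univ) fun i _ => hp_nonneg i]
  · let i₀ : Fin m := ⟨0, by omega⟩
    let i₁ : Fin m := ⟨1, by omega⟩
    have htwo : p i₀ + p i₁ ≤ ∑ i, p i := by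
      rw [← Finset.sum_pair (show i₀ ≠ i₁ by simp [i₀, i₁, Fin.ext_iff])]
      exact Finset.sum_le_sum_of_subset_of_nonneg (Finset.subset_univ _)
        fun i _ _ => hp_nonneg i
    have htri : 1 ≤ f (.inl 0) + p i₀ := by
      simpa only [closedNbrSum_inr, add_assoc] using hf.2.1 (.inr (i₀, 0))
    linarith [(leaf_pair_sum_bound hf i₁).2 hc]

def minimalSRDF (m : ℕ) : Fin 1 ⊕ (Fin m × Fin 2) → ℤ :=
  Sum.elim (fun _ => 2) fun p => if p.2 = 0 then 1 else -1

lemma sum_minimalSRDF : ∑ v, minimalSRDF m v = 2 := by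
  rw [sum_eq]
  simp [minimalSRDF]

lemma isSRDF_minimalSRDF : IsSRDF (friendshipGraph m) (minimalSRDF m) := by
  refine ⟨?_, ?_, ?_⟩
  · rintro (_ | ⟨_, b⟩)
    · simp [minimalSRDF]
    · by_cases b = 0 <;> simp [minimalSRDF, *]
  · rintro (j | ⟨i, a⟩)
    · rw [closedNbrSum_inl, sum_minimalSRDF]; norm_num
    · simp [closedNbrSum_inr, minimalSRDF]
  · rintro (_ | ⟨i, _⟩) h
    · simp [minimalSRDF] at h
    · exact ⟨.inl 0, adj_inr_inl _ _, rfl⟩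

end friendshipGraph

theorem stmt13 (m : ℕ) (hm : 2 ≤ m) :
    gammaSR (friendshipGraph m) = 2 := by
  rw [← friendshipGraph.sum_minimalSRDF (m := m)]
  refine gammaSR_eq_of_isSRDF friendshipGraph.isSRDF_minimalSRDF fun g hg => ?_
  rw [friendshipGraph.sum_minimalSRDF]
  exact friendshipGraph.two_le_sum_of_isSRDF hm hg
end
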